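/- arXiv:2107.08921 — 2 statements merged into one kernel-verified Lean document; each statement's English description precedes it below -/
import Mathlib

section
/- In the free algebra of process terms over constants \underline{a} (for a in a finite action set A ∪ {τ, δ}) and operations alternative composition (+), sequential composition (·), and one-time-slice delay σ, every closed term built additionally with parallel composition, left merge, communication merge, encapsulation ∂_H, abstraction τ_I, and current-time-slice time-out ν is provably equal, in the equational theory ACP_drt^τ, to a basic term, where basic terms are generated by: \underline{a} for a ∈ A ∪ {τ,δ}; \underline{a}·t for a ∈ A ∪ {τ} and basic t; σ(t) for basic t; and t + t' for basic t, t'. -/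
set_option autoImplicit true

/-- Actions extended with the silent action τ and deadlock δ. -/
inductive ATD (A : Type) : Type where
  | act : A → ATD A
  | tau : ATD A
  | delta : ATD A

/-- Terms of ACP_drt^τ with guarded recursion (variables are natural numbers,
a recursive specification is a total function from variables to terms). -/
inductive Tm (A : Type) : Type where
  | und : ATD A → Tm A            -- undelayable action/silent step/deadlock constant
  | alt : Tm A → Tm A → Tm A      -- alternative composition +
  | seq : Tm A → Tm A → Tm A      -- sequential composition ·
  | delay : Tm A → Tm A           -- one-time-slice delay σ
  | par : Tm A → Tm A → Tm A      -- parallel composition ∥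
  | lm : Tm A → Tm A → Tm A       -- left merge ⌊
  | cm : Tm A → Tm A → Tm A       -- communication merge |
  | encap : Set A → Tm A → Tm A   -- encapsulation ∂_H
  | abstr : Set A → Tm A → Tm A   -- abstraction τ_I
  | timeout : Tm A → Tm A         -- current-time-slice time-out ν
  | var : ℕ → Tm A                -- variable
  | recc : (ℕ → Tm A) → ℕ → Tm A   -- recursion constant ⟨X|E⟩
  | shift : Tm A → Tm A           -- one-time-slice shift ω (auxiliary)
  | tfp : Tm A → Tm A             -- time-free projection π_tf (auxiliary)

namespace Tm
variable {A : Type}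

/-- Apply an assignment of terms to variables (leaving recursion constants,
whose variables are bound, untouched). -/
def asg (θ : ℕ → Tm A) : Tm A → Tm A
  | und a => und a
  | alt t u => alt (asg θ t) (asg θ u)
  | seq t u => seq (asg θ t) (asg θ u)
  | delay t => delay (asg θ t)
  | par t u => par (asg θ t) (asg θ u)
  | lm t u => lm (asg θ t) (asg θ u)
  | cm t u => cm (asg θ t) (asg θ u)
  | encap H t => encap H (asg θ t)
  | abstr I t => abstr I (asg θ t)
  | timeout t => timeout (asg θ t)
  | var X => θ X
  | recc E X => recc E X
  | shift t => shift (asg θ t)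
  | tfp t => tfp (asg θ t)

/-- ⟨t|E⟩ : replace each variable Y of t by the recursion constant ⟨Y|E⟩. -/
def sub (E : ℕ → Tm A) (t : Tm A) : Tm A := asg (fun Y => recc E Y) t

/-- n-fold one-time-slice delay σⁿ. -/
def delayN : ℕ → Tm A → Tm A
  | 0, t => t
  | n+1, t => delay (delayN n t)

/-- n-fold one-time-slice shift ωⁿ. -/
def shiftN : ℕ → Tm A → Tm A
  | 0, t => t
  | n+1, t => shift (shiftN n t)

/-- Syntactically guarded term: no abstraction operator occurs and each variable
occurrence is within a subterm a·t' (a an observable action) or σ(t'). -/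
def Guarded : Tm A → Prop
  | und _ => True
  | alt t u => Guarded t ∧ Guarded u
  | seq t u => Guarded t ∧ (Guarded u ∨ ∃ a : A, t = und (ATD.act a))
  | delay _ => True
  | par t u => Guarded t ∧ Guarded u
  | lm t u => Guarded t ∧ Guarded u
  | cm t u => Guarded t ∧ Guarded u
  | encap _ t => Guarded t
  | abstr _ _ => False
  | timeout t => Guarded t
  | var _ => False
  | recc _ _ => True
  | shift t => Guarded t
  | tfp _ => False

/-- Guarded recursive specification. -/
def GuardedSpec (E : ℕ → Tm A) : Prop := ∀ Y, Guarded (E Y)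

/-- No free variables (variables inside recursion constants are bound). -/
def NoFreeVar : Tm A → Prop
  | und _ => True
  | alt t u => NoFreeVar t ∧ NoFreeVar u
  | seq t u => NoFreeVar t ∧ NoFreeVar u
  | delay t => NoFreeVar t
  | par t u => NoFreeVar t ∧ NoFreeVar u
  | lm t u => NoFreeVar t ∧ NoFreeVar u
  | cm t u => NoFreeVar t ∧ NoFreeVar u
  | encap _ t => NoFreeVar t
  | abstr _ t => NoFreeVar t
  | timeout t => NoFreeVar t
  | var _ => False
  | recc _ _ => True
  | shift t => NoFreeVar t
  | tfp t => NoFreeVar t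

/-- Proper ACP_drt^τ+REC term body: the auxiliary operators ω and π_tf do not
occur and all recursive specifications occurring in it are guarded. -/
def PT : Tm A → Prop
  | und _ => True
  | alt t u => PT t ∧ PT u
  | seq t u => PT t ∧ PT u
  | delay t => PT t
  | par t u => PT t ∧ PT u
  | lm t u => PT t ∧ PT u
  | cm t u => PT t ∧ PT u
  | encap _ t => PT t
  | abstr _ t => PT t
  | timeout t => PT t
  | var _ => True
  | recc E _ => ∀ Y, Guarded (E Y) ∧ PT (E Y)
  | shift _ => False
  | tfp _ => False

/-- Element of 𝒫: closed ACP_drt^τ+REC term. -/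
def PTm (t : Tm A) : Prop := PT t ∧ NoFreeVar t

/-- Closed ACP_drt^τ term (recursion-free, no variables, no auxiliary operators). -/
def Plain : Tm A → Prop
  | und _ => True
  | alt t u => Plain t ∧ Plain u
  | seq t u => Plain t ∧ Plain u
  | delay t => Plain t
  | par t u => Plain t ∧ Plain u
  | lm t u => Plain t ∧ Plain u
  | cm t u => Plain t ∧ Plain u
  | encap _ t => Plain t
  | abstr _ t => Plain t
  | timeout t => Plain t
  | var _ => False
  | recc _ _ => False
  | shift _ => False
  | tfp _ => False

/-- No recursion constant occurs. -/
def RecFree : Tm A → Prop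
  | und _ => True
  | alt t u => RecFree t ∧ RecFree u
  | seq t u => RecFree t ∧ RecFree u
  | delay t => RecFree t
  | par t u => RecFree t ∧ RecFree u
  | lm t u => RecFree t ∧ RecFree u
  | cm t u => RecFree t ∧ RecFree u
  | encap _ t => RecFree t
  | abstr _ t => RecFree t
  | timeout t => RecFree t
  | var _ => True
  | recc _ _ => False
  | shift t => RecFree t
  | tfp t => RecFree t

/-- No abstraction operator occurs. -/
def AbstrFree : Tm A → Prop
  | und _ => True
  | alt t u => AbstrFree t ∧ AbstrFree u
  | seq t u => AbstrFree t ∧ AbstrFree u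
  | delay t => AbstrFree t
  | par t u => AbstrFree t ∧ AbstrFree u
  | lm t u => AbstrFree t ∧ AbstrFree u
  | cm t u => AbstrFree t ∧ AbstrFree u
  | encap _ t => AbstrFree t
  | abstr _ _ => False
  | timeout t => AbstrFree t
  | var _ => True
  | recc E _ => ∀ Y, AbstrFree (E Y)
  | shift t => AbstrFree t
  | tfp t => AbstrFree t

/-- Term of BPA_drt^τ+REC: no ∥, ⌊, |, ∂_H and no auxiliary operators. -/
def BpaP : Tm A → Prop
  | und _ => True
  | alt t u => BpaP t ∧ BpaP u
  | seq t u => BpaP t ∧ BpaP u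
  | delay t => BpaP t
  | par _ _ => False
  | lm _ _ => False
  | cm _ _ => False
  | encap _ _ => False
  | abstr _ t => BpaP t
  | timeout t => BpaP t
  | var _ => True
  | recc E _ => ∀ Y, BpaP (E Y)
  | shift _ => False
  | tfp _ => False

/-- The delayable action a = ⟨X | X = \underline{a} + σ(X)⟩. -/
def dact (a : ATD A) : Tm A := recc (fun _ => alt (und a) (delay (var 0))) 0

end Tm

/-- Finite alternative composition (the empty sum is \underline{δ}). -/
def altList {A : Type} : List (Tm A) → Tm A
  | [] => .und .delta
  | [t] => t
  | t :: ts => .alt t (altList ts)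

/-- Finite parallel composition (the empty composition is \underline{δ}). -/
def parList {A : Type} : List (Tm A) → Tm A
  | [] => .und .delta
  | [t] => t
  | t :: ts => .par t (parList ts)

/-- Basic terms over ACP_drt^τ. -/
inductive Basic {A : Type} : Tm A → Prop where
  | und (a : ATD A) : Basic (.und a)
  | pre (a : ATD A) (h : a ≠ ATD.delta) {t : Tm A} : Basic t → Basic (.seq (.und a) t)
  | delay {t : Tm A} : Basic t → Basic (.delay t)
  | alt {t u : Tm A} : Basic t → Basic u → Basic (.alt t u)

/-- ts-basic terms over ACP_drt^τ. -/
inductive TsBasic {A : Type} : Tm A → Prop where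
  | und (a : ATD A) (n : ℕ) : TsBasic (Tm.delayN n (.und a))
  | pre (a : ATD A) (n : ℕ) (h : a ≠ ATD.delta) {t : Tm A} :
      TsBasic t → TsBasic (.seq (Tm.delayN n (.und a)) t)
  | alt {t u : Tm A} : TsBasic t → TsBasic u → TsBasic (.alt t u)

/-- Linear terms. -/
inductive Linear {A : Type} : Tm A → Prop where
  | und (a : ATD A) : Linear (.und a)
  | pre (a : ATD A) (h : a ≠ ATD.delta) (X : ℕ) : Linear (.seq (.und a) (.var X))
  | delay (X : ℕ) : Linear (.delay (.var X))
  | alt {t u : Tm A} : Linear t → Linear u → Linear (.alt t u)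

/-- Derivability in (conditional) equational logic from the axioms of ACP_drt^τ,
optionally (recOK) with the axioms RDP and RSP for guarded recursion, and
optionally with additional axioms Ax. -/
inductive Deriv {A : Type} (γ : ATD A → ATD A → ATD A) (Ax : Tm A → Tm A → Prop)
    (recOK : Bool) : Tm A → Tm A → Prop where
  | refl (t) : Deriv γ Ax recOK t t
  | symm {t u} : Deriv γ Ax recOK t u → Deriv γ Ax recOK u t
  | trans {t u v} : Deriv γ Ax recOK t u → Deriv γ Ax recOK u v → Deriv γ Ax recOK t v
  | altCongr {t t' u u'} : Deriv γ Ax recOK t t' → Deriv γ Ax recOK u u' →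
      Deriv γ Ax recOK (.alt t u) (.alt t' u')
  | seqCongr {t t' u u'} : Deriv γ Ax recOK t t' → Deriv γ Ax recOK u u' →
      Deriv γ Ax recOK (.seq t u) (.seq t' u')
  | delayCongr {t t'} : Deriv γ Ax recOK t t' → Deriv γ Ax recOK (.delay t) (.delay t')
  | parCongr {t t' u u'} : Deriv γ Ax recOK t t' → Deriv γ Ax recOK u u' →
      Deriv γ Ax recOK (.par t u) (.par t' u')
  | lmCongr {t t' u u'} : Deriv γ Ax recOK t t' → Deriv γ Ax recOK u u' →
      Deriv γ Ax recOK (.lm t u) (.lm t' u')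
  | cmCongr {t t' u u'} : Deriv γ Ax recOK t t' → Deriv γ Ax recOK u u' →
      Deriv γ Ax recOK (.cm t u) (.cm t' u')
  | encapCongr (H) {t t'} : Deriv γ Ax recOK t t' →
      Deriv γ Ax recOK (.encap H t) (.encap H t')
  | abstrCongr (I) {t t'} : Deriv γ Ax recOK t t' →
      Deriv γ Ax recOK (.abstr I t) (.abstr I t')
  | timeoutCongr {t t'} : Deriv γ Ax recOK t t' →
      Deriv γ Ax recOK (.timeout t) (.timeout t')
  | shiftCongr {t t'} : Deriv γ Ax recOK t t' → Deriv γ Ax recOK (.shift t) (.shift t')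
  | tfpCongr {t t'} : Deriv γ Ax recOK t t' → Deriv γ Ax recOK (.tfp t) (.tfp t')
  | extra {t u} : Ax t u → Deriv γ Ax recOK t u
  -- A1–A7DR
  | A1 (x y) : Deriv γ Ax recOK (.alt x y) (.alt y x)
  | A2 (x y z) : Deriv γ Ax recOK (.alt (.alt x y) z) (.alt x (.alt y z))
  | A3 (x) : Deriv γ Ax recOK (.alt x x) x
  | A4 (x y z) : Deriv γ Ax recOK (.seq (.alt x y) z) (.alt (.seq x z) (.seq y z))
  | A5 (x y z) : Deriv γ Ax recOK (.seq (.seq x y) z) (.seq x (.seq y z))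
  | A6DR (x) : Deriv γ Ax recOK (.alt x (.und .delta)) x
  | A7DR (x) : Deriv γ Ax recOK (.seq (.und .delta) x) (.und .delta)
  -- DRT1, DRT2
  | DRT1 (x y) : Deriv γ Ax recOK (.alt (.delay x) (.delay y)) (.delay (.alt x y))
  | DRT2 (x y) : Deriv γ Ax recOK (.seq (.delay x) y) (.delay (.seq x y))
  -- encapsulation
  | D1DR (a : ATD A) (H : Set A) (h : ∀ b, a = ATD.act b → b ∉ H) :
      Deriv γ Ax recOK (.encap H (.und a)) (.und a)
  | D2DR (b : A) (H : Set A) (h : b ∈ H) :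
      Deriv γ Ax recOK (.encap H (.und (.act b))) (.und .delta)
  | D3 (H x y) : Deriv γ Ax recOK (.encap H (.alt x y)) (.alt (.encap H x) (.encap H y))
  | D4 (H x y) : Deriv γ Ax recOK (.encap H (.seq x y)) (.seq (.encap H x) (.encap H y))
  | DRD (H x) : Deriv γ Ax recOK (.encap H (.delay x)) (.delay (.encap H x))
  -- abstraction
  | TI1DR (a : ATD A) (I : Set A) (h : ∀ b, a = ATD.act b → b ∉ I) :
      Deriv γ Ax recOK (.abstr I (.und a)) (.und a)
  | TI2DR (b : A) (I : Set A) (h : b ∈ I) :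
      Deriv γ Ax recOK (.abstr I (.und (.act b))) (.und .tau)
  | TI3 (I x y) : Deriv γ Ax recOK (.abstr I (.alt x y)) (.alt (.abstr I x) (.abstr I y))
  | TI4 (I x y) : Deriv γ Ax recOK (.abstr I (.seq x y)) (.seq (.abstr I x) (.abstr I y))
  | DRTI (I x) : Deriv γ Ax recOK (.abstr I (.delay x)) (.delay (.abstr I x))
  -- merge
  | CM1 (x y) : Deriv γ Ax recOK (.par x y) (.alt (.alt (.lm x y) (.lm y x)) (.cm x y))
  | CM2DR (a : ATD A) (x) : Deriv γ Ax recOK (.lm (.und a) x) (.seq (.und a) x)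
  | CM3DR (a : ATD A) (x y) :
      Deriv γ Ax recOK (.lm (.seq (.und a) x) y) (.seq (.und a) (.par x y))
  | DRCM1 (x y) : Deriv γ Ax recOK (.lm (.delay x) (.timeout y)) (.und .delta)
  | DRCM2 (x y z) : Deriv γ Ax recOK (.lm (.delay x) (.alt (.timeout y) (.delay z)))
      (.delay (.lm x z))
  | CM4 (x y z) : Deriv γ Ax recOK (.lm (.alt x y) z) (.alt (.lm x z) (.lm y z))
  | CM5DR (a b : ATD A) (x) : Deriv γ Ax recOK (.cm (.seq (.und a) x) (.und b))
      (.seq (.cm (.und a) (.und b)) x)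
  | CM6DR (a b : ATD A) (x) : Deriv γ Ax recOK (.cm (.und a) (.seq (.und b) x))
      (.seq (.cm (.und a) (.und b)) x)
  | CM7DR (a b : ATD A) (x y) : Deriv γ Ax recOK (.cm (.seq (.und a) x) (.seq (.und b) y))
      (.seq (.cm (.und a) (.und b)) (.par x y))
  | DRCM3 (x y) : Deriv γ Ax recOK (.cm (.timeout x) (.delay y)) (.und .delta)
  | DRCM4 (x y) : Deriv γ Ax recOK (.cm (.delay x) (.timeout y)) (.und .delta)
  | DRCM5 (x y) : Deriv γ Ax recOK (.cm (.delay x) (.delay y)) (.delay (.cm x y))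
  | CM8 (x y z) : Deriv γ Ax recOK (.cm (.alt x y) z) (.alt (.cm x z) (.cm y z))
  | CM9 (x y z) : Deriv γ Ax recOK (.cm x (.alt y z)) (.alt (.cm x y) (.cm x z))
  | CFDR (a b : ATD A) : Deriv γ Ax recOK (.cm (.und a) (.und b)) (.und (γ a b))
  -- time-out
  | DRTO1 (a : ATD A) : Deriv γ Ax recOK (.timeout (.und a)) (.und a)
  | DRTO2 (x y) : Deriv γ Ax recOK (.timeout (.alt x y)) (.alt (.timeout x) (.timeout y))
  | DRTO3 (x y) : Deriv γ Ax recOK (.timeout (.seq x y)) (.seq (.timeout x) y)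
  | DRTO4 (x) : Deriv γ Ax recOK (.timeout (.delay x)) (.und .delta)
  -- silent step
  | DRB1 (a : ATD A) : Deriv γ Ax recOK (.seq (.und a) (.und .tau)) (.und a)
  | DRB2 (a : ATD A) (x y) : Deriv γ Ax recOK
      (.seq (.und a) (.alt (.seq (.und .tau) (.alt (.timeout x) y)) (.timeout x)))
      (.seq (.und a) (.alt (.timeout x) y))
  | DRB3 (a : ATD A) (x y) : Deriv γ Ax recOK
      (.seq (.und a) (.alt (.seq (.und .tau) (.alt (.timeout x) y)) y))
      (.seq (.und a) (.alt (.timeout x) y))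
  | DRB4 (a : ATD A) (x y) : Deriv γ Ax recOK
      (.seq (.und a) (.alt (.delay (.seq (.und .tau) x)) (.timeout y)))
      (.seq (.und a) (.alt (.delay x) (.timeout y)))
  -- recursion
  | RDP (E : ℕ → Tm A) (X : ℕ) (hrec : recOK = true) (hg : Tm.GuardedSpec E) :
      Deriv γ Ax recOK (.recc E X) (Tm.sub E (E X))
  | RSP (E : ℕ → Tm A) (θ : ℕ → Tm A) (X : ℕ) (hrec : recOK = true)
      (hg : Tm.GuardedSpec E) (h : ∀ Y, Deriv γ Ax recOK (θ Y) (Tm.asg θ (E Y))) :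
      Deriv γ Ax recOK (θ X) (.recc E X)

/-- The empty set of additional axioms. -/
def NoAx {A : Type} : Tm A → Tm A → Prop := fun _ _ => False

/-! ### Two-phase structural operational semantics -/

/-- Map a transition label (A ∪ {τ}, with `none` = τ) into A ∪ {τ,δ}. -/
def toATD {A : Type} : Option A → ATD A
  | some a => ATD.act a
  | none => ATD.tau

/-- Combination of the residues of two synchronously performed actions
(`none` stands for successful termination √). -/
def parOpt {A : Type} : Option (Tm A) → Option (Tm A) → Option (Tm A)
  | some x, some y => some (.par x y)
  | some x, none => some x
  | none, some y => some y
  | none, none => none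

/-- Capability of idling till the next time slice. -/
inductive CanIdle {A : Type} : Tm A → Prop where
  | delay (t : Tm A) : CanIdle (.delay t)
  | altL {t u : Tm A} : CanIdle t → CanIdle (.alt t u)
  | altR {t u : Tm A} : CanIdle u → CanIdle (.alt t u)
  | seq {t : Tm A} (u : Tm A) : CanIdle t → CanIdle (.seq t u)
  | par {t u : Tm A} : CanIdle t → CanIdle u → CanIdle (.par t u)
  | lm {t u : Tm A} : CanIdle t → CanIdle u → CanIdle (.lm t u)
  | cm {t u : Tm A} : CanIdle t → CanIdle u → CanIdle (.cm t u)
  | encap (H : Set A) {t : Tm A} : CanIdle t → CanIdle (.encap H t)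
  | abstr (I : Set A) {t : Tm A} : CanIdle t → CanIdle (.abstr I t)
  | recc {E : ℕ → Tm A} {X : ℕ} : Tm.GuardedSpec E →
      CanIdle (Tm.sub E (E X)) → CanIdle (.recc E X)

/-- σ-transitions of the two-phase semantics (Table 3). -/
inductive SStep {A : Type} : Tm A → Tm A → Prop where
  | delay (t : Tm A) : SStep (.delay t) t
  | altL {t t' u : Tm A} : SStep t t' → ¬ CanIdle u → SStep (.alt t u) t'
  | altR {t u u' : Tm A} : ¬ CanIdle t → SStep u u' → SStep (.alt t u) u'
  | altB {t t' u u' : Tm A} : SStep t t' → SStep u u' → SStep (.alt t u) (.alt t' u')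
  | seq {t t' : Tm A} (u : Tm A) : SStep t t' → SStep (.seq t u) (.seq t' u)
  | par {t t' u u' : Tm A} : SStep t t' → SStep u u' → SStep (.par t u) (.par t' u')
  | lm {t t' u u' : Tm A} : SStep t t' → SStep u u' → SStep (.lm t u) (.lm t' u')
  | cm {t t' u u' : Tm A} : SStep t t' → SStep u u' → SStep (.cm t u) (.cm t' u')
  | encap (H : Set A) {t t' : Tm A} : SStep t t' → SStep (.encap H t) (.encap H t')
  | abstr (I : Set A) {t t' : Tm A} : SStep t t' → SStep (.abstr I t) (.abstr I t')
  | recc {E : ℕ → Tm A} {X : ℕ} {t' : Tm A} : Tm.GuardedSpec E →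
      SStep (Tm.sub E (E X)) t' → SStep (.recc E X) t'

/-- Action transitions of the two-phase semantics (Table 3); the label `none`
is the silent step τ and the target `none` is successful termination √. -/
inductive AStep {A : Type} (γ : ATD A → ATD A → ATD A) :
    Tm A → Option A → Option (Tm A) → Prop where
  | act (a : A) : AStep γ (.und (.act a)) (some a) none
  | tau : AStep γ (.und .tau) none none
  | altL {t u ℓ o} : AStep γ t ℓ o → AStep γ (.alt t u) ℓ o
  | altR {t u ℓ o} : AStep γ u ℓ o → AStep γ (.alt t u) ℓ o
  | seqStep {t t' u ℓ} : AStep γ t ℓ (some t') → AStep γ (.seq t u) ℓ (some (.seq t' u))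
  | seqTerm {t u ℓ} : AStep γ t ℓ none → AStep γ (.seq t u) ℓ (some u)
  | parL {t t' u ℓ} : AStep γ t ℓ (some t') → AStep γ (.par t u) ℓ (some (.par t' u))
  | parR {t u u' ℓ} : AStep γ u ℓ (some u') → AStep γ (.par t u) ℓ (some (.par t u'))
  | parLT {t u ℓ} : AStep γ t ℓ none → AStep γ (.par t u) ℓ (some u)
  | parRT {t u ℓ} : AStep γ u ℓ none → AStep γ (.par t u) ℓ (some t)
  | parC {t u ℓ₁ ℓ₂ ℓ o₁ o₂} : AStep γ t ℓ₁ o₁ → AStep γ u ℓ₂ o₂ →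
      γ (toATD ℓ₁) (toATD ℓ₂) = toATD ℓ → AStep γ (.par t u) ℓ (parOpt o₁ o₂)
  | lmStep {t t' u ℓ} : AStep γ t ℓ (some t') → AStep γ (.lm t u) ℓ (some (.par t' u))
  | lmTerm {t u ℓ} : AStep γ t ℓ none → AStep γ (.lm t u) ℓ (some u)
  | cmC {t u ℓ₁ ℓ₂ ℓ o₁ o₂} : AStep γ t ℓ₁ o₁ → AStep γ u ℓ₂ o₂ →
      γ (toATD ℓ₁) (toATD ℓ₂) = toATD ℓ → AStep γ (.cm t u) ℓ (parOpt o₁ o₂)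
  | encap (H : Set A) {t ℓ o} : AStep γ t ℓ o → (∀ b, ℓ = some b → b ∉ H) →
      AStep γ (.encap H t) ℓ (Option.map (Tm.encap H) o)
  | abstrKeep (I : Set A) {t ℓ o} : AStep γ t ℓ o → (∀ b, ℓ = some b → b ∉ I) →
      AStep γ (.abstr I t) ℓ (Option.map (Tm.abstr I) o)
  | abstrHide (I : Set A) {t b o} : AStep γ t (some b) o → b ∈ I →
      AStep γ (.abstr I t) none (Option.map (Tm.abstr I) o)
  | timeout {t ℓ o} : AStep γ t ℓ o → AStep γ (.timeout t) ℓ o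
  | recc {E X ℓ o} : Tm.GuardedSpec E → AStep γ (Tm.sub E (E X)) ℓ o →
      AStep γ (.recc E X) ℓ o

/-- Labels of the two-phase semantics: A ∪ {τ} ∪ {σ}. -/
inductive L2 (A : Type) where
  | act : A → L2 A
  | tau : L2 A
  | sig : L2 A

/-- Combined transition relation of the two-phase semantics. -/
def Step {A : Type} (γ : ATD A → ATD A → ATD A) (t : Tm A) :
    L2 A → Option (Tm A) → Prop
  | .act a, o => AStep γ t (some a) o
  | .tau, o => AStep γ t none o
  | .sig, o => ∃ t', o = some t' ∧ SStep t t'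

/-- A silent path t₂ = t*₀ →τ t*₁ →τ ⋯ →τ t*ₙ with R(t₁, t*ᵢ₊₁) at every step. -/
inductive TauSeq {A : Type} (γ : ATD A → ATD A → ATD A)
    (R : Option (Tm A) → Option (Tm A) → Prop) (t1 t2 : Tm A) : Tm A → Prop where
  | refl : TauSeq γ R t1 t2 t2
  | step {u v : Tm A} : TauSeq γ R t1 t2 u → AStep γ u none (some v) →
      R (some t1) (some v) → TauSeq γ R t1 t2 v

/-- Branching bisimulation on the two-phase semantics. -/
def IsBB {A : Type} (γ : ATD A → ATD A → ATD A)
    (R : Option (Tm A) → Option (Tm A) → Prop) : Prop :=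
  ∀ t1 t2, R (some t1) (some t2) →
    (∀ ℓ o1, Step γ t1 ℓ o1 →
      (ℓ = L2.tau ∧ R o1 (some t2)) ∨
      ∃ u o2, TauSeq γ R t1 t2 u ∧ Step γ u ℓ o2 ∧ R o1 o2) ∧
    (∀ ℓ o2, Step γ t2 ℓ o2 →
      (ℓ = L2.tau ∧ R (some t1) o2) ∨
      ∃ u o1, TauSeq γ (fun p q => R q p) t2 t1 u ∧ Step γ u ℓ o1 ∧ R o1 o2)

/-- Branching bisimilarity ↔_b on the two-phase semantics. -/
def BBisim {A : Type} (γ : ATD A → ATD A → ATD A) (t1 t2 : Tm A) : Prop :=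
  ∃ R, IsBB γ R ∧ R (some t1) (some t2)

/-- The root condition of a pair in a relation (two-phase semantics). -/
def RootCond {A : Type} (γ : ATD A → ATD A → ATD A)
    (R : Option (Tm A) → Option (Tm A) → Prop) (t1 t2 : Tm A) : Prop :=
  (∀ ℓ o1, Step γ t1 ℓ o1 → ∃ o2, Step γ t2 ℓ o2 ∧ R o1 o2) ∧
  (∀ ℓ o2, Step γ t2 ℓ o2 → ∃ o1, Step γ t1 ℓ o1 ∧ R o1 o2)

/-- Reachability by idling only. -/
def Midling {A : Type} : Tm A → Tm A → Prop := Relation.ReflTransGen SStep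

/-- Rooted branching bisimilarity ↔_rb on the two-phase semantics. -/
def RootedBB {A : Type} (γ : ATD A → ATD A → ATD A) (t1 t2 : Tm A) : Prop :=
  ∃ R, IsBB γ R ∧ R (some t1) (some t2) ∧
    ∀ t1' t2', Midling t1 t1' → Midling t2 t2' → R (some t1') (some t2') →
      RootCond γ R t1' t2'

/-! ### Time-stamped structural operational semantics -/

/-- Idling relation of the time-stamped semantics: t ⇑ n. -/
inductive Idles {A : Type} : Tm A → ℕ → Prop where
  | zero (t : Tm A) : Idles t 0
  | altL {t u n} : Idles t n → Idles (.alt t u) n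
  | altR {t u n} : Idles u n → Idles (.alt t u) n
  | seq {t n} (u : Tm A) : Idles t n → Idles (.seq t u) n
  | delay {t n} : Idles t n → Idles (.delay t) (n+1)
  | par {t u n} : Idles t n → Idles u n → Idles (.par t u) n
  | lm {t u n} : Idles t n → Idles u n → Idles (.lm t u) n
  | cm {t u n} : Idles t n → Idles u n → Idles (.cm t u) n
  | encap (H : Set A) {t n} : Idles t n → Idles (.encap H t) n
  | abstr (I : Set A) {t n} : Idles t n → Idles (.abstr I t) n
  | recc {E X n} : Tm.GuardedSpec E → Idles (Tm.sub E (E X)) n → Idles (.recc E X) n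
  | shift {t n} : Idles t (n+1) → Idles (.shift t) n

/-- Time-stamped transitions t →^{a[n]} t' (Table 6); the label `none` is τ and
the target `none` is successful termination √. -/
inductive TStep {A : Type} (γ : ATD A → ATD A → ATD A) :
    Tm A → Option A → ℕ → Option (Tm A) → Prop where
  | act (a : A) : TStep γ (.und (.act a)) (some a) 0 none
  | tau : TStep γ (.und .tau) none 0 none
  | altL {t u ℓ n o} : TStep γ t ℓ n o → TStep γ (.alt t u) ℓ n o
  | altR {t u ℓ n o} : TStep γ u ℓ n o → TStep γ (.alt t u) ℓ n o
  | seqStep {t t' u ℓ n} : TStep γ t ℓ n (some t') →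
      TStep γ (.seq t u) ℓ n (some (.seq t' u))
  | seqTerm {t u ℓ n} : TStep γ t ℓ n none → TStep γ (.seq t u) ℓ n (some u)
  | delay {t ℓ n o} : TStep γ t ℓ n o → TStep γ (.delay t) ℓ (n+1) o
  | parL {t t' u ℓ n} : TStep γ t ℓ n (some t') → Idles u n →
      TStep γ (.par t u) ℓ n (some (.par t' (Tm.shiftN n u)))
  | parR {t u u' ℓ n} : Idles t n → TStep γ u ℓ n (some u') →
      TStep γ (.par t u) ℓ n (some (.par (Tm.shiftN n t) u'))
  | parLT {t u ℓ n} : TStep γ t ℓ n none → Idles u n →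
      TStep γ (.par t u) ℓ n (some (Tm.shiftN n u))
  | parRT {t u ℓ n} : Idles t n → TStep γ u ℓ n none →
      TStep γ (.par t u) ℓ n (some (Tm.shiftN n t))
  | parC {t u ℓ₁ ℓ₂ ℓ n o₁ o₂} : TStep γ t ℓ₁ n o₁ → TStep γ u ℓ₂ n o₂ →
      γ (toATD ℓ₁) (toATD ℓ₂) = toATD ℓ → TStep γ (.par t u) ℓ n (parOpt o₁ o₂)
  | lmStep {t t' u ℓ n} : TStep γ t ℓ n (some t') → Idles u n →
      TStep γ (.lm t u) ℓ n (some (.par t' (Tm.shiftN n u)))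
  | lmTerm {t u ℓ n} : TStep γ t ℓ n none → Idles u n →
      TStep γ (.lm t u) ℓ n (some (Tm.shiftN n u))
  | cmC {t u ℓ₁ ℓ₂ ℓ n o₁ o₂} : TStep γ t ℓ₁ n o₁ → TStep γ u ℓ₂ n o₂ →
      γ (toATD ℓ₁) (toATD ℓ₂) = toATD ℓ → TStep γ (.cm t u) ℓ n (parOpt o₁ o₂)
  | encap (H : Set A) {t ℓ n o} : TStep γ t ℓ n o → (∀ b, ℓ = some b → b ∉ H) →
      TStep γ (.encap H t) ℓ n (Option.map (Tm.encap H) o)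
  | abstrKeep (I : Set A) {t ℓ n o} : TStep γ t ℓ n o → (∀ b, ℓ = some b → b ∉ I) →
      TStep γ (.abstr I t) ℓ n (Option.map (Tm.abstr I) o)
  | abstrHide (I : Set A) {t b n o} : TStep γ t (some b) n o → b ∈ I →
      TStep γ (.abstr I t) none n (Option.map (Tm.abstr I) o)
  | timeout {t ℓ o} : TStep γ t ℓ 0 o → TStep γ (.timeout t) ℓ 0 o
  | recc {E X ℓ n o} : Tm.GuardedSpec E → TStep γ (Tm.sub E (E X)) ℓ n o →
      TStep γ (.recc E X) ℓ n o
  | shift {t ℓ n o} : TStep γ t ℓ (n+1) o → TStep γ (.shift t) ℓ n o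

/-- A time-stamped silent path from t₂ with accumulated duration, relating the
appropriately shifted t₁ with every intermediate state. -/
inductive TsSeq {A : Type} (γ : ATD A → ATD A → ATD A)
    (R : Option (Tm A) → Option (Tm A) → Prop) (t1 t2 : Tm A) : ℕ → Tm A → Prop where
  | refl : TsSeq γ R t1 t2 0 t2
  | step {k u nk v} : TsSeq γ R t1 t2 k u → TStep γ u none nk (some v) →
      R (some (Tm.shiftN (k+nk) t1)) (some v) → TsSeq γ R t1 t2 (k+nk) v

/-- ts-branching bisimulation. -/
def IsTsBB {A : Type} (γ : ATD A → ATD A → ATD A)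
    (R : Option (Tm A) → Option (Tm A) → Prop) : Prop :=
  ∀ t1 t2, R (some t1) (some t2) →
    (∀ ℓ n o1, TStep γ t1 ℓ n o1 →
      (ℓ = none ∧ R o1 (some (Tm.shiftN n t2))) ∨
      ∃ k u nm o2, TsSeq γ R t1 t2 k u ∧ TStep γ u ℓ nm o2 ∧ k + nm = n ∧ R o1 o2) ∧
    (∀ ℓ n o2, TStep γ t2 ℓ n o2 →
      (ℓ = none ∧ R (some (Tm.shiftN n t1)) o2) ∨
      ∃ k u nm o1, TsSeq γ (fun p q => R q p) t2 t1 k u ∧ TStep γ u ℓ nm o1 ∧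
        k + nm = n ∧ R o1 o2) ∧
    (∀ n, Idles t1 n ↔ Idles t2 n)

/-- The ts-root condition of a pair in a relation. -/
def TsRootCond {A : Type} (γ : ATD A → ATD A → ATD A)
    (R : Option (Tm A) → Option (Tm A) → Prop) (t1 t2 : Tm A) : Prop :=
  (∀ ℓ n o1, TStep γ t1 ℓ n o1 → ∃ o2, TStep γ t2 ℓ n o2 ∧ R o1 o2) ∧
  (∀ ℓ n o2, TStep γ t2 ℓ n o2 → ∃ o1, TStep γ t1 ℓ n o1 ∧ R o1 o2)

/-- Rooted ts-branching bisimilarity ↔'_rb. -/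
def RootedTsBB {A : Type} (γ : ATD A → ATD A → ATD A) (t1 t2 : Tm A) : Prop :=
  ∃ R, IsTsBB γ R ∧ R (some t1) (some t2) ∧ TsRootCond γ R t1 t2

/-- Activeness: the capability of performing an action in the current time
slice, possibly after some silent steps in the current time slice. -/
inductive Active {A : Type} (γ : ATD A → ATD A → ATD A) : Tm A → Prop where
  | obs {t : Tm A} {a : A} {t' : Tm A} : TStep γ t (some a) 0 (some t') → Active γ t
  | term {t : Tm A} {ℓ : Option A} : TStep γ t ℓ 0 none → Active γ t
  | tauStep {t t' : Tm A} : TStep γ t none 0 (some t') → Active γ t' → Active γ t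

/-- Activeness extended to 𝒫 ∪ {√} (√ is not active). -/
def ActiveO {A : Type} (γ : ATD A → ATD A → ATD A) : Option (Tm A) → Prop
  | some t => Active γ t
  | none => False

/-- A time-stamped silent path for dormancy-aware branching bisimulations:
relatedness of an intermediate state is only required when it is active. -/
inductive DaSeq {A : Type} (γ : ATD A → ATD A → ATD A)
    (R : Option (Tm A) → Option (Tm A) → Prop) (t1 t2 : Tm A) : ℕ → Tm A → Prop where
  | refl : DaSeq γ R t1 t2 0 t2
  | step {k u nk v} : DaSeq γ R t1 t2 k u → TStep γ u none nk (some v) →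
      (Active γ v → R (some (Tm.shiftN (k+nk) t1)) (some v)) → DaSeq γ R t1 t2 (k+nk) v

/-- Dormancy-aware branching bisimulation. -/
def IsDaBB {A : Type} (γ : ATD A → ATD A → ATD A)
    (R : Option (Tm A) → Option (Tm A) → Prop) : Prop :=
  ∀ t1 t2, R (some t1) (some t2) →
    (∀ ℓ n o1, TStep γ t1 ℓ n o1 →
      (ℓ = none ∧ (ActiveO γ o1 → R o1 (some (Tm.shiftN n t2)))) ∨
      ∃ k u nm o2, DaSeq γ R t1 t2 k u ∧ TStep γ u ℓ nm o2 ∧ k + nm = n ∧ R o1 o2) ∧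
    (∀ ℓ n o2, TStep γ t2 ℓ n o2 →
      (ℓ = none ∧ (ActiveO γ o2 → R (some (Tm.shiftN n t1)) o2)) ∨
      ∃ k u nm o1, DaSeq γ (fun p q => R q p) t2 t1 k u ∧ TStep γ u ℓ nm o1 ∧
        k + nm = n ∧ R o1 o2) ∧
    (∀ n, Idles t1 n ↔ Idles t2 n)

/-- Rooted dormancy-aware branching bisimilarity ⇄_rb. -/
def RootedDaBB {A : Type} (γ : ATD A → ATD A → ATD A) (t1 t2 : Tm A) : Prop :=
  ∃ R, IsDaBB γ R ∧ R (some t1) (some t2) ∧ TsRootCond γ R t1 t2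

/-- n-fold σ-step sequences in the two-phase semantics. -/
def SSeq {A : Type} : ℕ → Tm A → Tm A → Prop
  | 0, t, t' => t' = t
  | n+1, t, t' => ∃ u, SStep t u ∧ SSeq n u t'

/-- The axioms of standard concurrency together with the handshaking axiom. -/
inductive SCAx {A : Type} : Tm A → Tm A → Prop where
  | parComm (x y : Tm A) : SCAx (.par x y) (.par y x)
  | parAssoc (x y z : Tm A) : SCAx (.par (.par x y) z) (.par x (.par y z))
  | lmAssoc (x y z : Tm A) : SCAx (.lm (.lm x y) z) (.lm x (.par y z))
  | cmComm (x y : Tm A) : SCAx (.cm x y) (.cm y x)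
  | cmAssoc (x y z : Tm A) : SCAx (.cm (.cm x y) z) (.cm x (.cm y z))
  | cmLm (x y z : Tm A) : SCAx (.cm x (.lm y z)) (.lm (.cm x y) z)
  | handshaking (x y z : Tm A) : SCAx (.timeout (.cm (.cm x y) z)) (.und .delta)

/-- The defining axioms of the time-free projection operator π_tf. -/
inductive TFPAx {A : Type} : Tm A → Tm A → Prop where
  | DRTFP1 (a : ATD A) : TFPAx (.tfp (.und a)) (Tm.dact a)
  | DRTFP2 (x y : Tm A) : TFPAx (.tfp (.alt x y)) (.alt (.tfp x) (.tfp y))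
  | DRTFP3 (x y : Tm A) : TFPAx (.tfp (.seq x y)) (.seq (.tfp x) (.tfp y))
  | DRTFP4 (x : Tm A) : TFPAx (.tfp (.delay x)) (.tfp x)

/-! ### The untimed theory ACP^τ+REC -/

/-- Terms of untimed ACP^τ with guarded recursion. -/
inductive UTm (A : Type) : Type where
  | c : ATD A → UTm A
  | alt : UTm A → UTm A → UTm A
  | seq : UTm A → UTm A → UTm A
  | par : UTm A → UTm A → UTm A
  | lm : UTm A → UTm A → UTm A
  | cm : UTm A → UTm A → UTm A
  | encap : Set A → UTm A → UTm A
  | abstr : Set A → UTm A → UTm A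
  | var : ℕ → UTm A
  | recc : (ℕ → UTm A) → ℕ → UTm A

namespace UTm
variable {A : Type}

def asg (θ : ℕ → UTm A) : UTm A → UTm A
  | c a => c a
  | alt t u => alt (asg θ t) (asg θ u)
  | seq t u => seq (asg θ t) (asg θ u)
  | par t u => par (asg θ t) (asg θ u)
  | lm t u => lm (asg θ t) (asg θ u)
  | cm t u => cm (asg θ t) (asg θ u)
  | encap H t => encap H (asg θ t)
  | abstr I t => abstr I (asg θ t)
  | var X => θ X
  | recc E X => recc E X

def sub (E : ℕ → UTm A) (t : UTm A) : UTm A := asg (fun Y => recc E Y) t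

def Guarded : UTm A → Prop
  | c _ => True
  | alt t u => Guarded t ∧ Guarded u
  | seq t u => Guarded t ∧ (Guarded u ∨ ∃ a : A, t = c (ATD.act a))
  | par t u => Guarded t ∧ Guarded u
  | lm t u => Guarded t ∧ Guarded u
  | cm t u => Guarded t ∧ Guarded u
  | encap _ t => Guarded t
  | abstr _ _ => False
  | var _ => False
  | recc _ _ => True

def GuardedSpec (E : ℕ → UTm A) : Prop := ∀ Y, Guarded (E Y)

/-- Closed untimed term. -/
def Closed : UTm A → Prop
  | c _ => True
  | alt t u => Closed t ∧ Closed u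
  | seq t u => Closed t ∧ Closed u
  | par t u => Closed t ∧ Closed u
  | lm t u => Closed t ∧ Closed u
  | cm t u => Closed t ∧ Closed u
  | encap _ t => Closed t
  | abstr _ t => Closed t
  | var _ => False
  | recc _ _ => True

end UTm

/-- Derivability from the axioms of untimed ACP^τ+REC (with the branching
silent-step axioms B1 and B2 and with RDP and RSP). -/
inductive UDeriv {A : Type} (γ : ATD A → ATD A → ATD A) : UTm A → UTm A → Prop where
  | refl (t) : UDeriv γ t t
  | symm {t u} : UDeriv γ t u → UDeriv γ u t
  | trans {t u v} : UDeriv γ t u → UDeriv γ u v → UDeriv γ t v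
  | altCongr {t t' u u'} : UDeriv γ t t' → UDeriv γ u u' → UDeriv γ (.alt t u) (.alt t' u')
  | seqCongr {t t' u u'} : UDeriv γ t t' → UDeriv γ u u' → UDeriv γ (.seq t u) (.seq t' u')
  | parCongr {t t' u u'} : UDeriv γ t t' → UDeriv γ u u' → UDeriv γ (.par t u) (.par t' u')
  | lmCongr {t t' u u'} : UDeriv γ t t' → UDeriv γ u u' → UDeriv γ (.lm t u) (.lm t' u')
  | cmCongr {t t' u u'} : UDeriv γ t t' → UDeriv γ u u' → UDeriv γ (.cm t u) (.cm t' u')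
  | encapCongr (H) {t t'} : UDeriv γ t t' → UDeriv γ (.encap H t) (.encap H t')
  | abstrCongr (I) {t t'} : UDeriv γ t t' → UDeriv γ (.abstr I t) (.abstr I t')
  | A1 (x y) : UDeriv γ (.alt x y) (.alt y x)
  | A2 (x y z) : UDeriv γ (.alt (.alt x y) z) (.alt x (.alt y z))
  | A3 (x) : UDeriv γ (.alt x x) x
  | A4 (x y z) : UDeriv γ (.seq (.alt x y) z) (.alt (.seq x z) (.seq y z))
  | A5 (x y z) : UDeriv γ (.seq (.seq x y) z) (.seq x (.seq y z))
  | A6 (x) : UDeriv γ (.alt x (.c .delta)) x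
  | A7 (x) : UDeriv γ (.seq (.c .delta) x) (.c .delta)
  | D1 (a : ATD A) (H : Set A) (h : ∀ b, a = ATD.act b → b ∉ H) :
      UDeriv γ (.encap H (.c a)) (.c a)
  | D2 (b : A) (H : Set A) (h : b ∈ H) : UDeriv γ (.encap H (.c (.act b))) (.c .delta)
  | D3 (H x y) : UDeriv γ (.encap H (.alt x y)) (.alt (.encap H x) (.encap H y))
  | D4 (H x y) : UDeriv γ (.encap H (.seq x y)) (.seq (.encap H x) (.encap H y))
  | TI1 (a : ATD A) (I : Set A) (h : ∀ b, a = ATD.act b → b ∉ I) :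
      UDeriv γ (.abstr I (.c a)) (.c a)
  | TI2 (b : A) (I : Set A) (h : b ∈ I) : UDeriv γ (.abstr I (.c (.act b))) (.c .tau)
  | TI3 (I x y) : UDeriv γ (.abstr I (.alt x y)) (.alt (.abstr I x) (.abstr I y))
  | TI4 (I x y) : UDeriv γ (.abstr I (.seq x y)) (.seq (.abstr I x) (.abstr I y))
  | CM1 (x y) : UDeriv γ (.par x y) (.alt (.alt (.lm x y) (.lm y x)) (.cm x y))
  | CM2 (a : ATD A) (x) : UDeriv γ (.lm (.c a) x) (.seq (.c a) x)
  | CM3 (a : ATD A) (x y) : UDeriv γ (.lm (.seq (.c a) x) y) (.seq (.c a) (.par x y))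
  | CM4 (x y z) : UDeriv γ (.lm (.alt x y) z) (.alt (.lm x z) (.lm y z))
  | CM5 (a b : ATD A) (x) : UDeriv γ (.cm (.seq (.c a) x) (.c b)) (.seq (.cm (.c a) (.c b)) x)
  | CM6 (a b : ATD A) (x) : UDeriv γ (.cm (.c a) (.seq (.c b) x)) (.seq (.cm (.c a) (.c b)) x)
  | CM7 (a b : ATD A) (x y) :
      UDeriv γ (.cm (.seq (.c a) x) (.seq (.c b) y)) (.seq (.cm (.c a) (.c b)) (.par x y))
  | CM8 (x y z) : UDeriv γ (.cm (.alt x y) z) (.alt (.cm x z) (.cm y z))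
  | CM9 (x y z) : UDeriv γ (.cm x (.alt y z)) (.alt (.cm x y) (.cm x z))
  | CF (a b : ATD A) : UDeriv γ (.cm (.c a) (.c b)) (.c (γ a b))
  | B1 (x) : UDeriv γ (.seq x (.c .tau)) x
  | B2 (x y z) : UDeriv γ (.seq x (.alt (.seq (.c .tau) (.alt y z)) z)) (.seq x (.alt y z))
  | RDP (E : ℕ → UTm A) (X : ℕ) (hg : UTm.GuardedSpec E) :
      UDeriv γ (.recc E X) (UTm.sub E (E X))
  | RSP (E : ℕ → UTm A) (θ : ℕ → UTm A) (X : ℕ) (hg : UTm.GuardedSpec E)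
      (h : ∀ Y, UDeriv γ (θ Y) (UTm.asg θ (E Y))) : UDeriv γ (θ X) (.recc E X)

/-- The embedding ε of untimed ACP^τ+REC terms into ACP_drt^τ+REC, replacing
each action constant a by the delayable action ⟨X | X = \underline{a} + σ(X)⟩. -/
def eps {A : Type} : UTm A → Tm A
  | .c a => Tm.dact a
  | .alt t u => .alt (eps t) (eps u)
  | .seq t u => .seq (eps t) (eps u)
  | .par t u => .par (eps t) (eps u)
  | .lm t u => .lm (eps t) (eps u)
  | .cm t u => .cm (eps t) (eps u)
  | .encap H t => .encap H (eps t)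
  | .abstr I t => .abstr I (eps t)
  | .var X => .var X
  | .recc E X => .recc (fun Y => eps (E Y)) X

namespace ElimAux

open Tm

variable {A : Type} {γ : ATD A → ATD A → ATD A}

/-- Weight of a term, used as termination measure. -/
def wt {A : Type} : Tm A → ℕ
  | .und _ => 1
  | .alt t u => wt t + wt u + 1
  | .seq t u => wt t + wt u + 1
  | .delay t => wt t + 1
  | .par t u => wt t + wt u + 2
  | .lm t u => wt t + wt u + 1
  | .cm t u => wt t + wt u + 1
  | .encap _ t => wt t + 1
  | .abstr _ t => wt t + 1
  | .timeout t => wt t + 1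
  | _ => 1

lemma altComm3 (a b c : Tm A) :
    Deriv γ NoAx false (.alt (.alt a b) c) (.alt (.alt a c) b) :=
  (Deriv.A2 a b c).trans ((Deriv.altCongr (Deriv.refl a) (Deriv.A1 b c)).trans
    (Deriv.A2 a c b).symm)

lemma perm4 (a b c d : Tm A) :
    Deriv γ NoAx false (.alt (.alt a b) (.alt c d)) (.alt (.alt a c) (.alt b d)) := by
  refine (Deriv.A2 a b (.alt c d)).trans
    ((Deriv.altCongr (Deriv.refl a) ?_).trans (Deriv.A2 a c (.alt b d)).symm)
  exact (Deriv.A2 b c d).symm.trans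
    ((Deriv.altCongr (Deriv.A1 b c) (Deriv.refl d)).trans (Deriv.A2 c b d))

lemma seqUnd (a : ATD A) (u : Tm A) (hu : Basic u) :
    ∃ v, Basic v ∧ Deriv γ NoAx false (.seq (.und a) u) v := by
  by_cases h : a = ATD.delta
  · subst h; exact ⟨.und .delta, .und _, Deriv.A7DR u⟩
  · exact ⟨_, Basic.pre a h hu, .refl _⟩

lemma seqBasic {t u : Tm A} (ht : Basic t) (hu : Basic u) :
    ∃ v, Basic v ∧ Deriv γ NoAx false (.seq t u) v := by
  induction ht with
  | und a => exact seqUnd a u hu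
  | pre a h ht ih =>
    obtain ⟨v, hv, hd⟩ := ih
    exact ⟨.seq (.und a) v, Basic.pre a h hv,
      (Deriv.A5 _ _ _).trans (Deriv.seqCongr (Deriv.refl _) hd)⟩
  | delay ht ih =>
    obtain ⟨v, hv, hd⟩ := ih
    exact ⟨.delay v, Basic.delay hv, (Deriv.DRT2 _ _).trans (Deriv.delayCongr hd)⟩
  | alt h1 h2 ih1 ih2 =>
    obtain ⟨v1, hv1, d1⟩ := ih1
    obtain ⟨v2, hv2, d2⟩ := ih2
    exact ⟨.alt v1 v2, Basic.alt hv1 hv2,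
      (Deriv.A4 _ _ _).trans (Deriv.altCongr d1 d2)⟩

lemma encapBasic (H : Set A) {t : Tm A} (ht : Basic t) :
    ∃ v, Basic v ∧ Deriv γ NoAx false (.encap H t) v := by
  induction ht with
  | und a =>
    by_cases h : ∃ b, a = ATD.act b ∧ b ∈ H
    · obtain ⟨b, rfl, hb⟩ := h
      exact ⟨.und .delta, .und _, Deriv.D2DR b H hb⟩
    · exact ⟨.und a, .und a, Deriv.D1DR a H (fun b hb hbH => h ⟨b, hb, hbH⟩)⟩
  | pre a h ht ih =>
    obtain ⟨v, hv, hd⟩ := ih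
    by_cases hb : ∃ b, a = ATD.act b ∧ b ∈ H
    · obtain ⟨b, rfl, hbH⟩ := hb
      exact ⟨.und .delta, .und _, (Deriv.D4 H _ _).trans
        ((Deriv.seqCongr (Deriv.D2DR b H hbH) hd).trans (Deriv.A7DR v))⟩
    · exact ⟨.seq (.und a) v, Basic.pre a h hv, (Deriv.D4 H _ _).trans
        (Deriv.seqCongr (Deriv.D1DR a H (fun b h1 h2 => hb ⟨b, h1, h2⟩)) hd)⟩
  | delay ht ih =>
    obtain ⟨v, hv, hd⟩ := ih
    exact ⟨.delay v, Basic.delay hv, (Deriv.DRD H _).trans (Deriv.delayCongr hd)⟩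
  | alt h1 h2 ih1 ih2 =>
    obtain ⟨v1, hv1, d1⟩ := ih1
    obtain ⟨v2, hv2, d2⟩ := ih2
    exact ⟨.alt v1 v2, Basic.alt hv1 hv2,
      (Deriv.D3 H _ _).trans (Deriv.altCongr d1 d2)⟩

lemma abstrBasic (I : Set A) {t : Tm A} (ht : Basic t) :
    ∃ v, Basic v ∧ Deriv γ NoAx false (.abstr I t) v := by
  induction ht with
  | und a =>
    by_cases h : ∃ b, a = ATD.act b ∧ b ∈ I
    · obtain ⟨b, rfl, hb⟩ := h
      exact ⟨.und .tau, .und _, Deriv.TI2DR b I hb⟩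
    · exact ⟨.und a, .und a, Deriv.TI1DR a I (fun b hb hbI => h ⟨b, hb, hbI⟩)⟩
  | pre a h ht ih =>
    obtain ⟨v, hv, hd⟩ := ih
    by_cases hb : ∃ b, a = ATD.act b ∧ b ∈ I
    · obtain ⟨b, rfl, hbI⟩ := hb
      exact ⟨.seq (.und .tau) v, Basic.pre _ (by intro h'; cases h') hv,
        (Deriv.TI4 I _ _).trans (Deriv.seqCongr (Deriv.TI2DR b I hbI) hd)⟩
    · exact ⟨.seq (.und a) v, Basic.pre a h hv, (Deriv.TI4 I _ _).trans
        (Deriv.seqCongr (Deriv.TI1DR a I (fun b h1 h2 => hb ⟨b, h1, h2⟩)) hd)⟩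
  | delay ht ih =>
    obtain ⟨v, hv, hd⟩ := ih
    exact ⟨.delay v, Basic.delay hv, (Deriv.DRTI I _).trans (Deriv.delayCongr hd)⟩
  | alt h1 h2 ih1 ih2 =>
    obtain ⟨v1, hv1, d1⟩ := ih1
    obtain ⟨v2, hv2, d2⟩ := ih2
    exact ⟨.alt v1 v2, Basic.alt hv1 hv2,
      (Deriv.TI3 I _ _).trans (Deriv.altCongr d1 d2)⟩

lemma timeoutBasic {t : Tm A} (ht : Basic t) :
    ∃ v, Basic v ∧ Deriv γ NoAx false (.timeout t) v := by
  induction ht with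
  | und a => exact ⟨.und a, .und a, Deriv.DRTO1 a⟩
  | pre a h ht ih =>
    exact ⟨.seq (.und a) _, Basic.pre a h ht,
      (Deriv.DRTO3 _ _).trans (Deriv.seqCongr (Deriv.DRTO1 a) (Deriv.refl _))⟩
  | delay ht ih => exact ⟨.und .delta, .und _, Deriv.DRTO4 _⟩
  | alt h1 h2 ih1 ih2 =>
    obtain ⟨v1, hv1, d1⟩ := ih1
    obtain ⟨v2, hv2, d2⟩ := ih2
    exact ⟨.alt v1 v2, Basic.alt hv1 hv2,
      (Deriv.DRTO2 _ _).trans (Deriv.altCongr d1 d2)⟩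

/-- Decomposition of a basic term into a now-part and possibly a delay part. -/
lemma decomp {u : Tm A} (hu : Basic u) :
    (∃ y, Deriv γ NoAx false u (.timeout y)) ∨
    (∃ y z, Basic z ∧ wt z < wt u ∧
      Deriv γ NoAx false u (.alt (.timeout y) (.delay z))) := by
  induction hu with
  | und a => exact .inl ⟨_, (Deriv.DRTO1 a).symm⟩
  | pre a h ht ih =>
    exact .inl ⟨_, ((Deriv.DRTO3 _ _).trans
      (Deriv.seqCongr (Deriv.DRTO1 a) (Deriv.refl _))).symm⟩
  | @delay t ht ih =>
    refine .inr ⟨.und .delta, t, ht, by simp [wt], ?_⟩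
    exact ((Deriv.altCongr (Deriv.DRTO1 .delta) (Deriv.refl _)).trans
      ((Deriv.A1 _ _).trans (Deriv.A6DR _))).symm
  | @alt t u h1 h2 ih1 ih2 =>
    rcases ih1 with ⟨y1, d1⟩ | ⟨y1, z1, hz1, hw1, d1⟩ <;>
      rcases ih2 with ⟨y2, d2⟩ | ⟨y2, z2, hz2, hw2, d2⟩
    · exact .inl ⟨.alt y1 y2, (Deriv.altCongr d1 d2).trans (Deriv.DRTO2 _ _).symm⟩
    · refine .inr ⟨.alt y1 y2, z2, hz2, by simp [wt]; omega, ?_⟩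
      exact (Deriv.altCongr d1 d2).trans ((Deriv.A2 _ _ _).symm.trans
        (Deriv.altCongr (Deriv.DRTO2 _ _).symm (Deriv.refl _)))
    · refine .inr ⟨.alt y1 y2, z1, hz1, by simp [wt]; omega, ?_⟩
      exact (Deriv.altCongr d1 d2).trans ((altComm3 _ _ _).trans
        (Deriv.altCongr (Deriv.DRTO2 _ _).symm (Deriv.refl _)))
    · refine .inr ⟨.alt y1 y2, .alt z1 z2, Basic.alt hz1 hz2, by simp [wt]; omega, ?_⟩
      exact (Deriv.altCongr d1 d2).trans ((perm4 _ _ _ _).trans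
        (Deriv.altCongr (Deriv.DRTO2 _ _).symm (Deriv.DRT1 _ _)))

lemma merge_elim : ∀ n (t u : Tm A), Basic t → Basic u → wt t + wt u ≤ n →
    (∃ v, Basic v ∧ Deriv γ NoAx false (.lm t u) v) ∧
    (∃ v, Basic v ∧ Deriv γ NoAx false (.cm t u) v) ∧
    (∃ v, Basic v ∧ Deriv γ NoAx false (.par t u) v) := by
  intro n
  induction n using Nat.strong_induction_on with
  | _ n IH =>
  have IH' : ∀ (t u : Tm A), Basic t → Basic u → wt t + wt u < n →
      (∃ v, Basic v ∧ Deriv γ NoAx false (.lm t u) v) ∧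
      (∃ v, Basic v ∧ Deriv γ NoAx false (.cm t u) v) ∧
      (∃ v, Basic v ∧ Deriv γ NoAx false (.par t u) v) :=
    fun t u ht hu h => IH (wt t + wt u) h t u ht hu le_rfl
  have HLM : ∀ (t u : Tm A), Basic t → Basic u → wt t + wt u ≤ n →
      ∃ v, Basic v ∧ Deriv γ NoAx false (.lm t u) v := by
    intro t u ht hu hn
    cases ht with
    | und a =>
      obtain ⟨v, hv, hd⟩ := seqUnd (γ := γ) a u hu
      exact ⟨v, hv, (Deriv.CM2DR a u).trans hd⟩
    | @pre a h t' ht' =>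
      obtain ⟨v, hv, hd⟩ := (IH' t' u ht' hu (by (try simp [wt] at hn); (try simp [wt]); omega)).2.2
      exact ⟨.seq (.und a) v, Basic.pre a h hv,
        (Deriv.CM3DR a t' u).trans (Deriv.seqCongr (Deriv.refl _) hd)⟩
    | @delay t' ht' =>
      rcases decomp (γ := γ) hu with ⟨y, d⟩ | ⟨y, z, hz, hw, d⟩
      · exact ⟨.und .delta, .und _,
          (Deriv.lmCongr (Deriv.refl _) d).trans (Deriv.DRCM1 _ _)⟩
      · obtain ⟨v, hv, hd⟩ := (IH' t' z ht' hz (by (try simp [wt] at hn); (try simp [wt]); omega)).1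
        exact ⟨.delay v, Basic.delay hv, (Deriv.lmCongr (Deriv.refl _) d).trans
          ((Deriv.DRCM2 _ _ _).trans (Deriv.delayCongr hd))⟩
    | @alt t1 t2 h1 h2 =>
      obtain ⟨v1, hv1, d1⟩ := (IH' t1 u h1 hu (by (try simp [wt] at hn); (try simp [wt]); omega)).1
      obtain ⟨v2, hv2, d2⟩ := (IH' t2 u h2 hu (by (try simp [wt] at hn); (try simp [wt]); omega)).1
      exact ⟨.alt v1 v2, Basic.alt hv1 hv2,
        (Deriv.CM4 _ _ _).trans (Deriv.altCongr d1 d2)⟩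
  have HCM : ∀ (t u : Tm A), Basic t → Basic u → wt t + wt u ≤ n →
      ∃ v, Basic v ∧ Deriv γ NoAx false (.cm t u) v := by
    intro t u ht hu hn
    cases ht with
    | @alt t1 t2 h1 h2 =>
      obtain ⟨v1, hv1, d1⟩ := (IH' t1 u h1 hu (by (try simp [wt] at hn); (try simp [wt]); omega)).2.1
      obtain ⟨v2, hv2, d2⟩ := (IH' t2 u h2 hu (by (try simp [wt] at hn); (try simp [wt]); omega)).2.1
      exact ⟨.alt v1 v2, Basic.alt hv1 hv2,
        (Deriv.CM8 _ _ _).trans (Deriv.altCongr d1 d2)⟩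
    | und a =>
      cases hu with
      | und b => exact ⟨.und (γ a b), .und _, Deriv.CFDR a b⟩
      | @pre b hb u' hu' =>
        obtain ⟨v, hv, hd⟩ := seqUnd (γ := γ) (γ a b) u' hu'
        exact ⟨v, hv, (Deriv.CM6DR a b u').trans
          ((Deriv.seqCongr (Deriv.CFDR a b) (Deriv.refl _)).trans hd)⟩
      | @delay u' hu' =>
        exact ⟨.und .delta, .und _, (Deriv.cmCongr (Deriv.DRTO1 a).symm
          (Deriv.refl _)).trans (Deriv.DRCM3 _ _)⟩
      | @alt u1 u2 h1 h2 =>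
        obtain ⟨v1, hv1, d1⟩ := (IH' _ u1 (.und a) h1 (by (try simp [wt] at hn); (try simp [wt]); omega)).2.1
        obtain ⟨v2, hv2, d2⟩ := (IH' _ u2 (.und a) h2 (by (try simp [wt] at hn); (try simp [wt]); omega)).2.1
        exact ⟨.alt v1 v2, Basic.alt hv1 hv2,
          (Deriv.CM9 _ _ _).trans (Deriv.altCongr d1 d2)⟩
    | @pre a ha t' ht' =>
      cases hu with
      | und b =>
        obtain ⟨v, hv, hd⟩ := seqUnd (γ := γ) (γ a b) t' ht'
        exact ⟨v, hv, (Deriv.CM5DR a b t').trans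
          ((Deriv.seqCongr (Deriv.CFDR a b) (Deriv.refl _)).trans hd)⟩
      | @pre b hb u' hu' =>
        obtain ⟨p, hp, dp⟩ := (IH' t' u' ht' hu' (by (try simp [wt] at hn); (try simp [wt]); omega)).2.2
        obtain ⟨v, hv, hd⟩ := seqUnd (γ := γ) (γ a b) p hp
        exact ⟨v, hv, (Deriv.CM7DR a b t' u').trans
          ((Deriv.seqCongr (Deriv.CFDR a b) dp).trans hd)⟩
      | @delay u' hu' =>
        have dv : Deriv γ NoAx false (.seq (.und a) t') (.timeout (.seq (.und a) t')) :=
          ((Deriv.DRTO3 _ _).trans (Deriv.seqCongr (Deriv.DRTO1 a) (Deriv.refl _))).symm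
        exact ⟨.und .delta, .und _,
          (Deriv.cmCongr dv (Deriv.refl _)).trans (Deriv.DRCM3 _ _)⟩
      | @alt u1 u2 h1 h2 =>
        obtain ⟨v1, hv1, d1⟩ :=
          (IH' _ u1 (Basic.pre a ha ht') h1 (by (try simp [wt] at hn); (try simp [wt]); omega)).2.1
        obtain ⟨v2, hv2, d2⟩ :=
          (IH' _ u2 (Basic.pre a ha ht') h2 (by (try simp [wt] at hn); (try simp [wt]); omega)).2.1
        exact ⟨.alt v1 v2, Basic.alt hv1 hv2,
          (Deriv.CM9 _ _ _).trans (Deriv.altCongr d1 d2)⟩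
    | @delay t' ht' =>
      cases hu with
      | und b =>
        exact ⟨.und .delta, .und _, (Deriv.cmCongr (Deriv.refl _)
          (Deriv.DRTO1 b).symm).trans (Deriv.DRCM4 _ _)⟩
      | @pre b hb u' hu' =>
        have dv : Deriv γ NoAx false (.seq (.und b) u') (.timeout (.seq (.und b) u')) :=
          ((Deriv.DRTO3 _ _).trans (Deriv.seqCongr (Deriv.DRTO1 b) (Deriv.refl _))).symm
        exact ⟨.und .delta, .und _,
          (Deriv.cmCongr (Deriv.refl _) dv).trans (Deriv.DRCM4 _ _)⟩
      | @delay u' hu' =>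
        obtain ⟨v, hv, hd⟩ := (IH' t' u' ht' hu' (by (try simp [wt] at hn); (try simp [wt]); omega)).2.1
        exact ⟨.delay v, Basic.delay hv,
          (Deriv.DRCM5 _ _).trans (Deriv.delayCongr hd)⟩
      | @alt u1 u2 h1 h2 =>
        obtain ⟨v1, hv1, d1⟩ :=
          (IH' _ u1 (Basic.delay ht') h1 (by (try simp [wt] at hn); (try simp [wt]); omega)).2.1
        obtain ⟨v2, hv2, d2⟩ :=
          (IH' _ u2 (Basic.delay ht') h2 (by (try simp [wt] at hn); (try simp [wt]); omega)).2.1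
        exact ⟨.alt v1 v2, Basic.alt hv1 hv2,
          (Deriv.CM9 _ _ _).trans (Deriv.altCongr d1 d2)⟩
  intro t u ht hu hn
  refine ⟨HLM t u ht hu hn, HCM t u ht hu hn, ?_⟩
  obtain ⟨v1, hv1, d1⟩ := HLM t u ht hu hn
  obtain ⟨v2, hv2, d2⟩ := HLM u t hu ht (by omega)
  obtain ⟨v3, hv3, d3⟩ := HCM t u ht hu hn
  exact ⟨.alt (.alt v1 v2) v3, Basic.alt (Basic.alt hv1 hv2) hv3,
    (Deriv.CM1 t u).trans (Deriv.altCongr (Deriv.altCongr d1 d2) d3)⟩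

end ElimAux
/-- Elimination theorem: every closed ACP_drt^τ term is provably equal, in the
equational theory ACP_drt^τ, to a basic term. -/
theorem elimination_to_basic {A : Type} [Fintype A] (γ : ATD A → ATD A → ATD A)
    (hγcomm : ∀ a b, γ a b = γ b a)
    (hγassoc : ∀ a b c, γ (γ a b) c = γ a (γ b c))
    (hγtau : ∀ a, γ ATD.tau a = ATD.delta)
    (hγdelta : ∀ a, γ ATD.delta a = ATD.delta)
    (t : Tm A) (ht : Tm.Plain t) :
    ∃ t' : Tm A, Basic t' ∧ Deriv γ NoAx false t t' := by
  clear hγcomm hγassoc hγtau hγdelta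
  revert ht
  induction t with
  | und a => exact fun _ => ⟨.und a, .und a, .refl _⟩
  | alt t u iht ihu =>
    intro ht
    obtain ⟨v1, hv1, d1⟩ := iht ht.1
    obtain ⟨v2, hv2, d2⟩ := ihu ht.2
    exact ⟨.alt v1 v2, Basic.alt hv1 hv2, Deriv.altCongr d1 d2⟩
  | seq t u iht ihu =>
    intro ht
    obtain ⟨v1, hv1, d1⟩ := iht ht.1
    obtain ⟨v2, hv2, d2⟩ := ihu ht.2
    obtain ⟨v, hv, hd⟩ := ElimAux.seqBasic (γ := γ) hv1 hv2
    exact ⟨v, hv, (Deriv.seqCongr d1 d2).trans hd⟩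
  | delay t iht =>
    intro ht
    obtain ⟨v, hv, d⟩ := iht ht
    exact ⟨.delay v, Basic.delay hv, Deriv.delayCongr d⟩
  | par t u iht ihu =>
    intro ht
    obtain ⟨v1, hv1, d1⟩ := iht ht.1
    obtain ⟨v2, hv2, d2⟩ := ihu ht.2
    obtain ⟨p, hp, dp⟩ :=
      (ElimAux.merge_elim (ElimAux.wt v1 + ElimAux.wt v2) v1 v2 hv1 hv2 le_rfl).2.2
    exact ⟨p, hp, (Deriv.parCongr d1 d2).trans dp⟩
  | lm t u iht ihu =>
    intro ht
    obtain ⟨v1, hv1, d1⟩ := iht ht.1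
    obtain ⟨v2, hv2, d2⟩ := ihu ht.2
    obtain ⟨p, hp, dp⟩ :=
      (ElimAux.merge_elim (ElimAux.wt v1 + ElimAux.wt v2) v1 v2 hv1 hv2 le_rfl).1
    exact ⟨p, hp, (Deriv.lmCongr d1 d2).trans dp⟩
  | cm t u iht ihu =>
    intro ht
    obtain ⟨v1, hv1, d1⟩ := iht ht.1
    obtain ⟨v2, hv2, d2⟩ := ihu ht.2
    obtain ⟨p, hp, dp⟩ :=
      (ElimAux.merge_elim (ElimAux.wt v1 + ElimAux.wt v2) v1 v2 hv1 hv2 le_rfl).2.1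
    exact ⟨p, hp, (Deriv.cmCongr d1 d2).trans dp⟩
  | encap H t iht =>
    intro ht
    obtain ⟨v, hv, d⟩ := iht ht
    obtain ⟨w, hw, hd⟩ := ElimAux.encapBasic (γ := γ) H hv
    exact ⟨w, hw, (Deriv.encapCongr H d).trans hd⟩
  | abstr I t iht =>
    intro ht
    obtain ⟨v, hv, d⟩ := iht ht
    obtain ⟨w, hw, hd⟩ := ElimAux.abstrBasic (γ := γ) I hv
    exact ⟨w, hw, (Deriv.abstrCongr I d).trans hd⟩
  | timeout t iht =>
    intro ht
    obtain ⟨v, hv, d⟩ := iht ht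
    obtain ⟨w, hw, hd⟩ := ElimAux.timeoutBasic (γ := γ) hv
    exact ⟨w, hw, (Deriv.timeoutCongr d).trans hd⟩
  | var X => exact fun ht => ht.elim
  | recc E X => exact fun ht => ht.elim
  | shift t iht => exact fun ht => ht.elim
  | tfp t iht => exact fun ht => ht.elim
end

section
/- Commutativity of parallel composition modulo ACP_drt^τ: for all closed ACP_drt^τ terms t and t' (with a commutative and associative communication function γ), the equation t ∥ t' = t' ∥ t is derivable from the axioms of ACP_drt^τ. -/
set_option autoImplicit true

/-! Every closed term is derivably equal to a basic term: the merge operators are eliminated by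
induction on the combined size of their basic arguments, where for `σ(x) ⌊ t` the argument `t`
is first split as `ν(t) + σ(v)` so that DRCM2 applies. On basic terms `s ∥ t = t ∥ s` follows
from `s | t = t | s` by CM1 and A1, and the latter is proved by induction from the
commutativity of `γ`, CM7DR reducing it to the same statement for the residues. -/

local notation:50 t:51 " =[" γ "] " u:51 => Deriv γ NoAx false t u

namespace Deriv

variable {A : Type} {γ : ATD A → ATD A → ATD A}

instance {Ax : Tm A → Tm A → Prop} {recOK : Bool} :
    Trans (Deriv γ Ax recOK) (Deriv γ Ax recOK) (Deriv γ Ax recOK) :=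
  ⟨trans⟩

theorem delta_alt (x : Tm A) : .alt (.und .delta) x =[γ] x :=
  (A1 _ _).trans (A6DR x)

theorem alt_right_comm (x y z : Tm A) : .alt (.alt x y) z =[γ] .alt (.alt x z) y :=
  (A2 x y z).trans ((altCongr (refl x) (A1 y z)).trans (A2 x z y).symm)

theorem alt_alt_alt_comm (w x y z : Tm A) :
    .alt (.alt w x) (.alt y z) =[γ] .alt (.alt w y) (.alt x z) :=
  (A2 w x _).trans ((altCongr (refl w) ((A2 x y z).symm.trans
    ((altCongr (A1 x y) (refl z)).trans (A2 y x z)))).trans (A2 w y _).symm)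

theorem timeout_pre (a : ATD A) (x : Tm A) : .timeout (.seq (.und a) x) =[γ] .seq (.und a) x :=
  (DRTO3 _ x).trans (seqCongr (DRTO1 a) (refl x))

theorem cm_und_pre (a b : ATD A) (y : Tm A) :
    .cm (.und a) (.seq (.und b) y) =[γ] .seq (.und (γ a b)) y :=
  (CM6DR a b y).trans (seqCongr (CFDR a b) (refl y))

theorem cm_pre_und (a b : ATD A) (x : Tm A) :
    .cm (.seq (.und a) x) (.und b) =[γ] .seq (.und (γ a b)) x :=
  (CM5DR a b x).trans (seqCongr (CFDR a b) (refl x))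

theorem cm_pre_pre (a b : ATD A) (x y : Tm A) :
    .cm (.seq (.und a) x) (.seq (.und b) y) =[γ] .seq (.und (γ a b)) (.par x y) :=
  (CM7DR a b x y).trans (seqCongr (CFDR a b) (refl _))

theorem cm_delay_right {s : Tm A} (hs : .timeout s =[γ] s) (y : Tm A) :
    .cm s (.delay y) =[γ] .und .delta :=
  (cmCongr hs.symm (refl _)).trans (DRCM3 s y)

theorem cm_delay_left {s : Tm A} (hs : .timeout s =[γ] s) (y : Tm A) :
    .cm (.delay y) s =[γ] .und .delta :=
  (cmCongr (refl _) hs.symm).trans (DRCM4 y s)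

theorem par_comm_of_cm_comm {x y : Tm A} (h : .cm x y =[γ] .cm y x) :
    .par x y =[γ] .par y x :=
  (CM1 x y).trans ((altCongr (A1 _ _) h).trans (CM1 y x).symm)

theorem exists_encap_und (H : Set A) : ∀ a : ATD A, ∃ a', .encap H (.und a) =[γ] .und a'
  | .act b => by
    by_cases hb : b ∈ H
    · exact ⟨_, D2DR b H hb⟩
    · exact ⟨_, D1DR _ H fun _ e => ATD.act.inj e ▸ hb⟩
  | .tau => ⟨_, D1DR _ H fun _ e => by cases e⟩
  | .delta => ⟨_, D1DR _ H fun _ e => by cases e⟩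

theorem exists_abstr_und (I : Set A) : ∀ a : ATD A, ∃ a', .abstr I (.und a) =[γ] .und a'
  | .act b => by
    by_cases hb : b ∈ I
    · exact ⟨_, TI2DR b I hb⟩
    · exact ⟨_, TI1DR _ I fun _ e => ATD.act.inj e ▸ hb⟩
  | .tau => ⟨_, TI1DR _ I fun _ e => by cases e⟩
  | .delta => ⟨_, TI1DR _ I fun _ e => by cases e⟩

end Deriv

section BasicForm

variable {A : Type} {γ : ATD A → ATD A → ATD A}

open Deriv

def HasBasicForm (γ : ATD A → ATD A → ATD A) (t : Tm A) : Prop :=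
  ∃ u, Basic u ∧ t =[γ] u

theorem Basic.hasBasicForm {t : Tm A} (ht : Basic t) : HasBasicForm γ t :=
  ⟨t, ht, refl t⟩

theorem hasBasicForm_delta : HasBasicForm (A := A) γ (.und .delta) :=
  (Basic.und _).hasBasicForm

namespace HasBasicForm

theorem of_deriv {t t' : Tm A} (h : t =[γ] t') : HasBasicForm γ t' → HasBasicForm γ t
  | ⟨u, hu, h'⟩ => ⟨u, hu, h.trans h'⟩

theorem alt {t u : Tm A} : HasBasicForm γ t → HasBasicForm γ u → HasBasicForm γ (.alt t u)
  | ⟨_, ht', htt'⟩, ⟨_, hu', huu'⟩ => ⟨_, .alt ht' hu', altCongr htt' huu'⟩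

theorem delay {t : Tm A} : HasBasicForm γ t → HasBasicForm γ (.delay t)
  | ⟨_, ht', htt'⟩ => ⟨_, .delay ht', delayCongr htt'⟩

theorem pre (a : ATD A) {t : Tm A} : HasBasicForm γ t → HasBasicForm γ (.seq (.und a) t)
  | ⟨_, ht', htt'⟩ => by
    by_cases ha : a = .delta
    · exact ⟨_, .und .delta, by subst ha; exact A7DR t⟩
    · exact ⟨_, .pre a ha ht', seqCongr (refl _) htt'⟩

theorem map {f : Tm A → Tm A} (hf : ∀ {t t'}, t =[γ] t' → f t =[γ] f t')
    (hbasic : ∀ {t}, Basic t → HasBasicForm γ (f t)) {t : Tm A} :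
    HasBasicForm γ t → HasBasicForm γ (f t)
  | ⟨_, ht', htt'⟩ => (hbasic ht').of_deriv (hf htt')

theorem map₂ {f : Tm A → Tm A → Tm A}
    (hf : ∀ {t t' u u'}, t =[γ] t' → u =[γ] u' → f t u =[γ] f t' u')
    (hbasic : ∀ {t u}, Basic t → Basic u → HasBasicForm γ (f t u)) {t u : Tm A} :
    HasBasicForm γ t → HasBasicForm γ u → HasBasicForm γ (f t u)
  | ⟨_, ht', htt'⟩, ⟨_, hu', huu'⟩ => (hbasic ht' hu').of_deriv (hf htt' huu')

end HasBasicForm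

namespace Basic

theorem hasBasicForm_seq {s t : Tm A} (hs : Basic s) (ht : HasBasicForm γ t) :
    HasBasicForm γ (.seq s t) := by
  induction hs with
  | und a => exact ht.pre a
  | pre a _ _ ih => exact (ih.pre a).of_deriv (A5 _ _ _)
  | delay _ ih => exact ih.delay.of_deriv (DRT2 _ _)
  | alt _ _ ih₁ ih₂ => exact (ih₁.alt ih₂).of_deriv (A4 _ _ _)

theorem hasBasicForm_timeout {s : Tm A} (hs : Basic s) : HasBasicForm γ (.timeout s) := by
  induction hs with
  | und a => exact (Basic.und a).hasBasicForm.of_deriv (DRTO1 a)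
  | pre a ha hx => exact (Basic.pre a ha hx).hasBasicForm.of_deriv (timeout_pre a _)
  | delay => exact hasBasicForm_delta.of_deriv (DRTO4 _)
  | alt _ _ ih₁ ih₂ => exact (ih₁.alt ih₂).of_deriv (DRTO2 _ _)

theorem hasBasicForm_encap (H : Set A) {s : Tm A} (hs : Basic s) :
    HasBasicForm γ (.encap H s) := by
  induction hs with
  | und a =>
    obtain ⟨a', h⟩ := exists_encap_und (γ := γ) H a
    exact (Basic.und a').hasBasicForm.of_deriv h
  | pre a _ _ ih =>
    obtain ⟨a', h⟩ := exists_encap_und (γ := γ) H a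
    exact (ih.pre a').of_deriv ((D4 H _ _).trans (seqCongr h (refl _)))
  | delay _ ih => exact ih.delay.of_deriv (DRD H _)
  | alt _ _ ih₁ ih₂ => exact (ih₁.alt ih₂).of_deriv (D3 H _ _)

theorem hasBasicForm_abstr (I : Set A) {s : Tm A} (hs : Basic s) :
    HasBasicForm γ (.abstr I s) := by
  induction hs with
  | und a =>
    obtain ⟨a', h⟩ := exists_abstr_und (γ := γ) I a
    exact (Basic.und a').hasBasicForm.of_deriv h
  | pre a _ _ ih =>
    obtain ⟨a', h⟩ := exists_abstr_und (γ := γ) I a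
    exact (ih.pre a').of_deriv ((TI4 I _ _).trans (seqCongr h (refl _)))
  | delay _ ih => exact ih.delay.of_deriv (DRTI I _)
  | alt _ _ ih₁ ih₂ => exact (ih₁.alt ih₂).of_deriv (TI3 I _ _)

theorem timeout_self_or_split {t : Tm A} (ht : Basic t) :
    .timeout t =[γ] t ∨
      ∃ v, Basic v ∧ sizeOf v < sizeOf t ∧ t =[γ] .alt (.timeout t) (.delay v) := by
  induction ht with
  | und a => exact .inl (DRTO1 a)
  | pre a _ _ => exact .inl (timeout_pre a _)
  | @delay v hv =>
    refine .inr ⟨v, hv, by simp only [Tm.delay.sizeOf_spec]; omega, ?_⟩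
    exact ((altCongr (DRTO4 v) (refl _)).trans (delta_alt _)).symm
  | @alt t₁ t₂ _ _ ih₁ ih₂ =>
    have hν : .timeout (.alt t₁ t₂) =[γ] .alt (.timeout t₁) (.timeout t₂) := DRTO2 t₁ t₂
    simp only [Tm.alt.sizeOf_spec]
    rcases ih₁ with h₁ | ⟨v₁, hv₁, hlt₁, h₁⟩ <;>
      rcases ih₂ with h₂ | ⟨v₂, hv₂, hlt₂, h₂⟩
    · exact .inl (hν.trans (altCongr h₁ h₂))
    · refine .inr ⟨v₂, hv₂, by omega, ?_⟩
      calc .alt t₁ t₂ =[γ] .alt t₁ (.alt (.timeout t₂) (.delay v₂)) := altCongr (refl _) h₂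
        _ =[γ] .alt (.alt t₁ (.timeout t₂)) (.delay v₂) := (A2 _ _ _).symm
        _ =[γ] _ := altCongr ((altCongr h₁.symm (refl _)).trans hν.symm) (refl _)
    · refine .inr ⟨v₁, hv₁, by omega, ?_⟩
      calc .alt t₁ t₂ =[γ] .alt (.alt (.timeout t₁) (.delay v₁)) t₂ := altCongr h₁ (refl _)
        _ =[γ] .alt (.alt (.timeout t₁) t₂) (.delay v₁) := alt_right_comm _ _ _
        _ =[γ] _ := altCongr ((altCongr (refl _) h₂.symm).trans hν.symm) (refl _)
    · refine .inr ⟨.alt v₁ v₂, .alt hv₁ hv₂, by simp only [Tm.alt.sizeOf_spec]; omega, ?_⟩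
      calc .alt t₁ t₂
          =[γ] .alt (.alt (.timeout t₁) (.delay v₁)) (.alt (.timeout t₂) (.delay v₂)) :=
            altCongr h₁ h₂
        _ =[γ] .alt (.alt (.timeout t₁) (.timeout t₂)) (.alt (.delay v₁) (.delay v₂)) :=
            alt_alt_alt_comm _ _ _ _
        _ =[γ] _ := altCongr hν.symm (DRT1 v₁ v₂)

theorem hasBasicForm_par_of_lm_cm {s t : Tm A} (hst : HasBasicForm γ (.lm s t))
    (hts : HasBasicForm γ (.lm t s)) (hcm : HasBasicForm γ (.cm s t)) :
    HasBasicForm γ (.par s t) :=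
  ((hst.alt hts).alt hcm).of_deriv (CM1 s t)

def MergesHaveBasicFormBelow (γ : ATD A → ATD A → ATD A) (n : ℕ) : Prop :=
  ∀ {s t : Tm A}, Basic s → Basic t → sizeOf s + sizeOf t < n →
    HasBasicForm γ (.lm s t) ∧ HasBasicForm γ (.cm s t)

theorem hasBasicForm_par_of_below {n : ℕ} (ih : MergesHaveBasicFormBelow γ n) {s t : Tm A}
    (hs : Basic s) (ht : Basic t) (h : sizeOf s + sizeOf t < n) : HasBasicForm γ (.par s t) :=
  hasBasicForm_par_of_lm_cm (ih hs ht h).1 (ih ht hs (by omega)).1 (ih hs ht h).2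

theorem hasBasicForm_lm_of_below {s t : Tm A} (hs : Basic s) (ht : Basic t)
    (ih : MergesHaveBasicFormBelow γ (sizeOf s + sizeOf t)) : HasBasicForm γ (.lm s t) := by
  cases hs with
  | und a => exact (ht.hasBasicForm.pre a).of_deriv (CM2DR a t)
  | pre a _ hx =>
    simp only [Tm.seq.sizeOf_spec] at ih
    exact ((hasBasicForm_par_of_below ih hx ht (by omega)).pre a).of_deriv (CM3DR a _ t)
  | delay hx =>
    simp only [Tm.delay.sizeOf_spec] at ih
    rcases ht.timeout_self_or_split (γ := γ) with hν | ⟨v, hv, hlt, htv⟩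
    · exact hasBasicForm_delta.of_deriv ((lmCongr (refl _) hν.symm).trans (DRCM1 _ t))
    · exact (ih hx hv (by omega)).1.delay.of_deriv ((lmCongr (refl _) htv).trans (DRCM2 _ t v))
  | alt hs₁ hs₂ =>
    simp only [Tm.alt.sizeOf_spec] at ih
    exact ((ih hs₁ ht (by omega)).1.alt (ih hs₂ ht (by omega)).1).of_deriv (CM4 _ _ t)

theorem hasBasicForm_cm_of_below {s t : Tm A} (hs : Basic s) (ht : Basic t)
    (ih : MergesHaveBasicFormBelow γ (sizeOf s + sizeOf t)) : HasBasicForm γ (.cm s t) := by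
  match hs, ht with
  | .alt hs₁ hs₂, ht =>
    simp only [Tm.alt.sizeOf_spec] at ih
    exact ((ih hs₁ ht (by omega)).2.alt (ih hs₂ ht (by omega)).2).of_deriv (CM8 _ _ t)
  | hs, .alt ht₁ ht₂ =>
    simp only [Tm.alt.sizeOf_spec] at ih
    exact ((ih hs ht₁ (by omega)).2.alt (ih hs ht₂ (by omega)).2).of_deriv (CM9 s _ _)
  | .und a, .und b => exact (Basic.und _).hasBasicForm.of_deriv (CFDR a b)
  | .und a, .pre b _ hy => exact (hy.hasBasicForm.pre _).of_deriv (cm_und_pre a b _)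
  | .pre a _ hx, .und b => exact (hx.hasBasicForm.pre _).of_deriv (cm_pre_und a b _)
  | .pre a _ hx, .pre b _ hy =>
    simp only [Tm.seq.sizeOf_spec] at ih
    exact ((hasBasicForm_par_of_below ih hx hy (by omega)).pre _).of_deriv (cm_pre_pre a b _ _)
  | .und a, .delay _ => exact hasBasicForm_delta.of_deriv (cm_delay_right (DRTO1 a) _)
  | .pre a _ _, .delay _ =>
    exact hasBasicForm_delta.of_deriv (cm_delay_right (timeout_pre a _) _)
  | .delay _, .und b => exact hasBasicForm_delta.of_deriv (cm_delay_left (DRTO1 b) _)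
  | .delay _, .pre b _ _ =>
    exact hasBasicForm_delta.of_deriv (cm_delay_left (timeout_pre b _) _)
  | .delay hx, .delay hy =>
    simp only [Tm.delay.sizeOf_spec] at ih
    exact (ih hx hy (by omega)).2.delay.of_deriv (DRCM5 _ _)

theorem hasBasicForm_lm_and_cm {s t : Tm A} (hs : Basic s) (ht : Basic t) :
    HasBasicForm γ (.lm s t) ∧ HasBasicForm γ (.cm s t) :=
  have ih : MergesHaveBasicFormBelow γ (sizeOf s + sizeOf t) :=
    fun hs' ht' _ => hasBasicForm_lm_and_cm hs' ht'
  ⟨hasBasicForm_lm_of_below hs ht ih, hasBasicForm_cm_of_below hs ht ih⟩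
termination_by sizeOf s + sizeOf t

theorem hasBasicForm_lm {s t : Tm A} (hs : Basic s) (ht : Basic t) :
    HasBasicForm γ (.lm s t) :=
  (hasBasicForm_lm_and_cm hs ht).1

theorem hasBasicForm_cm {s t : Tm A} (hs : Basic s) (ht : Basic t) :
    HasBasicForm γ (.cm s t) :=
  (hasBasicForm_lm_and_cm hs ht).2

theorem hasBasicForm_par {s t : Tm A} (hs : Basic s) (ht : Basic t) :
    HasBasicForm γ (.par s t) :=
  hasBasicForm_par_of_lm_cm (hasBasicForm_lm hs ht) (hasBasicForm_lm ht hs) (hasBasicForm_cm hs ht)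

theorem cm_comm (hγ : ∀ a b, γ a b = γ b a) {s t : Tm A} (hs : Basic s) (ht : Basic t) :
    .cm s t =[γ] .cm t s :=
  match hs, ht with
  | .alt hs₁ hs₂, ht =>
    (CM8 _ _ t).trans
      ((altCongr (cm_comm hγ hs₁ ht) (cm_comm hγ hs₂ ht)).trans (CM9 t _ _).symm)
  | hs, .alt ht₁ ht₂ =>
    (CM9 s _ _).trans
      ((altCongr (cm_comm hγ hs ht₁) (cm_comm hγ hs ht₂)).trans (CM8 _ _ s).symm)
  | .und a, .und b => (CFDR a b).trans (by rw [hγ a b]; exact (CFDR b a).symm)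
  | .und a, .pre b _ _ =>
    (cm_und_pre a b _).trans (by rw [hγ a b]; exact (cm_pre_und b a _).symm)
  | .pre a _ _, .und b =>
    (cm_pre_und a b _).trans (by rw [hγ a b]; exact (cm_und_pre b a _).symm)
  | .pre a _ hx, .pre b _ hy =>
    calc _ =[γ] .seq (.und (γ a b)) (.par _ _) := cm_pre_pre a b _ _
      _ =[γ] .seq (.und (γ b a)) (.par _ _) :=
        hγ a b ▸ seqCongr (refl _) (par_comm_of_cm_comm (cm_comm hγ hx hy))
      _ =[γ] _ := (cm_pre_pre b a _ _).symm
  | .und a, .delay _ => (cm_delay_right (DRTO1 a) _).trans (cm_delay_left (DRTO1 a) _).symm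
  | .pre a _ _, .delay _ =>
    (cm_delay_right (timeout_pre a _) _).trans (cm_delay_left (timeout_pre a _) _).symm
  | .delay _, .und b => (cm_delay_left (DRTO1 b) _).trans (cm_delay_right (DRTO1 b) _).symm
  | .delay _, .pre b _ _ =>
    (cm_delay_left (timeout_pre b _) _).trans (cm_delay_right (timeout_pre b _) _).symm
  | .delay hx, .delay hy =>
    (DRCM5 _ _).trans ((delayCongr (cm_comm hγ hx hy)).trans (DRCM5 _ _).symm)
termination_by sizeOf s + sizeOf t

end Basic

theorem Tm.Plain.hasBasicForm {t : Tm A} (ht : t.Plain) : HasBasicForm γ t := by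
  induction t with
  | und a => exact (Basic.und a).hasBasicForm
  | alt _ _ ih₁ ih₂ => exact (ih₁ ht.1).alt (ih₂ ht.2)
  | seq _ _ ih₁ ih₂ =>
    exact (ih₁ ht.1).map₂ seqCongr (fun hs hu => hs.hasBasicForm_seq hu.hasBasicForm)
      (ih₂ ht.2)
  | delay _ ih => exact (ih ht).delay
  | par _ _ ih₁ ih₂ => exact (ih₁ ht.1).map₂ parCongr Basic.hasBasicForm_par (ih₂ ht.2)
  | lm _ _ ih₁ ih₂ => exact (ih₁ ht.1).map₂ lmCongr Basic.hasBasicForm_lm (ih₂ ht.2)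
  | cm _ _ ih₁ ih₂ => exact (ih₁ ht.1).map₂ cmCongr Basic.hasBasicForm_cm (ih₂ ht.2)
  | encap H _ ih => exact (ih ht).map (encapCongr H) (Basic.hasBasicForm_encap H)
  | abstr I _ ih => exact (ih ht).map (abstrCongr I) (Basic.hasBasicForm_abstr I)
  | timeout _ ih => exact (ih ht).map timeoutCongr Basic.hasBasicForm_timeout
  | var | recc | shift | tfp => exact ht.elim

end BasicForm

theorem par_comm_derivable_general {A : Type} (γ : ATD A → ATD A → ATD A)
    (hγcomm : ∀ a b, γ a b = γ b a)
    (t t' : Tm A) (ht : Tm.Plain t) (ht' : Tm.Plain t') :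
    Deriv γ NoAx false (.par t t') (.par t' t) := by
  obtain ⟨u, hu, htu⟩ := ht.hasBasicForm (γ := γ)
  obtain ⟨u', hu', htu'⟩ := ht'.hasBasicForm (γ := γ)
  calc .par t t' =[γ] .par u u' := .parCongr htu htu'
    _ =[γ] .par u' u := Deriv.par_comm_of_cm_comm (Basic.cm_comm hγcomm hu hu')
    _ =[γ] .par t' t := (Deriv.parCongr htu' htu).symm

/-- Commutativity of parallel composition modulo ACP_drt^τ: for all closed
ACP_drt^τ terms t and t', the equation t ∥ t' = t' ∥ t is derivable from the
axioms of ACP_drt^τ. -/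
theorem par_comm_derivable {A : Type} [Fintype A] (γ : ATD A → ATD A → ATD A)
    (hγcomm : ∀ a b, γ a b = γ b a)
    (hγassoc : ∀ a b c, γ (γ a b) c = γ a (γ b c))
    (hγtau : ∀ a, γ ATD.tau a = ATD.delta)
    (hγdelta : ∀ a, γ ATD.delta a = ATD.delta)
    (t t' : Tm A) (ht : Tm.Plain t) (ht' : Tm.Plain t') :
    Deriv γ NoAx false (.par t t') (.par t' t) :=
  par_comm_derivable_general γ hγcomm t t' ht ht'
end
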